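/- Let r ≥ 0, let a ≥ r and b ≥ r, and let c < 1. If cosh(a)·cosh(b) − sinh(a)·sinh(b)·c = (cosh r)^2 − (sinh r)^2·c and r > 0, then a = r and b = r. (Rigidity: equality in the leg-comparison inequality forces the triangle to be the isoceles one with legs r.) -/
import Mathlib

theorem stmt2 (r a b c : ℝ) (hr : 0 < r) (ha : r ≤ a) (hb : r ≤ b) (hc : c < 1)
    (heq : Real.cosh a * Real.cosh b - Real.sinh a * Real.sinh b * c =
      Real.cosh r ^ 2 - Real.sinh r ^ 2 * c) :
    a = r ∧ b = r := by
  have hsr : 0 < Real.sinh r := Real.sinh_pos_iff.mpr hr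
  have hsa : Real.sinh r ≤ Real.sinh a := Real.sinh_le_sinh.mpr ha
  have hsb : Real.sinh r ≤ Real.sinh b := Real.sinh_le_sinh.mpr hb
  have hcosh : Real.cosh (a - b) = Real.cosh a * Real.cosh b - Real.sinh a * Real.sinh b :=
    Real.cosh_sub a b
  have hcr : Real.cosh r ^ 2 = Real.sinh r ^ 2 + 1 := Real.cosh_sq r
  have h1 : (1 : ℝ) ≤ Real.cosh (a - b) := Real.one_le_cosh (a - b)
  -- key: cosh(a-b) - 1 + (1-c) * (sinh a * sinh b - sinh r ^ 2) = 0
  have key : Real.cosh (a - b) - 1 + (1 - c) * (Real.sinh a * Real.sinh b - Real.sinh r ^ 2) = 0 := by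
    nlinarith [heq, hcosh, hcr]
  have hprod : Real.sinh r ^ 2 ≤ Real.sinh a * Real.sinh b := by nlinarith
  have hpe : Real.sinh a * Real.sinh b = Real.sinh r ^ 2 := by nlinarith
  have hae : Real.sinh a = Real.sinh r := by nlinarith
  have hbe : Real.sinh b = Real.sinh r := by nlinarith
  exact ⟨Real.sinh_injective hae, Real.sinh_injective hbe⟩
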